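/- arXiv:1501.05997 — 3 statements merged into one kernel-verified Lean document; each statement's English description precedes it below -/
import Mathlib

section
/- Let V be a finite-dimensional real vector space and T : V → V a linear isomorphism. Let V = V¹ ⊕ ... ⊕ Vʳ be the primary decomposition of T (each Vⁱ corresponding to an irreducible factor of the minimal polynomial of T), and for λ ∈ ℝ let E_λ = {v ∈ V : lim_{n→∞} (1/n) log ‖Tⁿ v‖ = λ} ∪ {0}. Then each primary component Vⁱ is contained in E_λ for λ = log|χᵢ|, where χᵢ is the absolute value of the eigenvalue(s) of T on Vⁱ; in particular the primary decomposition refines the Lyapunov space decomposition. -/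
open Filter Polynomial
open scoped ENNReal NNReal

attribute [local instance] Matrix.linftyOpNormedAddCommGroup Matrix.linftyOpNormedRing
  Matrix.linftyOpNormedAlgebra


/-- An injective linear map between finite-dimensional real normed spaces is bounded below. -/
lemma aux_inj_bound {E F : Type*} [NormedAddCommGroup E] [NormedSpace ℝ E]
    [NormedAddCommGroup F] [NormedSpace ℝ F] [FiniteDimensional ℝ E] [FiniteDimensional ℝ F]
    (f : E →ₗ[ℝ] F) (hf : Function.Injective f) :
    ∃ C > 0, ∀ x, ‖x‖ ≤ C * ‖f x‖ := by
  obtain ⟨g, hg⟩ := f.exists_leftInverse_of_injective (by rwa [LinearMap.ker_eq_bot])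
  let G := LinearMap.toContinuousLinearMap g
  refine ⟨‖G‖ + 1, by positivity, fun x => ?_⟩
  have hx : x = G (f x) := by
    have := LinearMap.congr_fun hg x
    simpa [G, LinearMap.coe_toContinuousLinearMap'] using this.symm
  calc ‖x‖ = ‖G (f x)‖ := by rw [← hx]
    _ ≤ ‖G‖ * ‖f x‖ := G.le_opNorm _
    _ ≤ (‖G‖ + 1) * ‖f x‖ := by
        have := norm_nonneg (f x); nlinarith [norm_nonneg G]

/-- Gelfand's formula in log form. -/
lemma aux_gelfand_log {A : Type*} [NormedRing A] [NormedAlgebra ℂ A] [CompleteSpace A]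
    (a : A) (ha : ∀ n : ℕ, a ^ n ≠ 0) (c : ℝ) (hc : 0 < c)
    (h : spectralRadius ℂ a = ENNReal.ofReal c) :
    Tendsto (fun n : ℕ => (1 / (n : ℝ)) * Real.log ‖a ^ n‖) atTop (nhds (Real.log c)) := by
  have h1 := spectrum.pow_nnnorm_pow_one_div_tendsto_nhds_spectralRadius a
  rw [h] at h1
  have h2 : Tendsto (fun n : ℕ => ‖a ^ n‖ ^ (1 / (n : ℝ))) atTop (nhds c) := by
    have := (ENNReal.tendsto_toReal (ENNReal.ofReal_ne_top)).comp h1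
    rw [ENNReal.toReal_ofReal hc.le] at this
    convert this using 2 with n
    rw [Function.comp_apply, ← ENNReal.toReal_rpow, ENNReal.coe_toReal, coe_nnnorm]
  have h3 := ((Real.continuousAt_log hc.ne').tendsto).comp h2
  have h4 : ∀ n : ℕ, Real.log (‖a ^ n‖ ^ (1 / (n : ℝ))) = (1 / (n : ℝ)) * Real.log ‖a ^ n‖ := by
    intro n
    exact Real.log_rpow (norm_pos_iff.mpr (ha n)) _
  convert h3 using 2 with n
  · rw [Function.comp_apply, h4]


set_option maxHeartbeats 2000000 in
/-- Each primary component of a linear automorphism `T` of a finite-dimensional real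
normed space is contained in the Lyapunov space `E_{log χ}`, where `χ` is the common
absolute value of the complex roots of the corresponding irreducible factor of the
minimal polynomial. -/
theorem primary_component_subset_lyapunov_space
    (V : Type*) [NormedAddCommGroup V] [NormedSpace ℝ V] [FiniteDimensional ℝ V]
    (T : V ≃ₗ[ℝ] V) (p : Polynomial ℝ) (m : ℕ) (χ : ℝ) (hχ : 0 < χ)
    (hp : Irreducible p)
    (hdvd : p ^ m ∣ minpoly ℝ (T.toLinearMap : Module.End ℝ V))
    (hroots : ∀ z : ℂ, (p.map (algebraMap ℝ ℂ)).IsRoot z → ‖z‖ = χ)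
    (v : V)
    (hv : v ∈ LinearMap.ker ((Polynomial.aeval (T.toLinearMap : Module.End ℝ V) p) ^ m)) :
    v = 0 ∨
      Filter.Tendsto
        (fun n : ℕ => (1 / (n : ℝ)) * Real.log ‖((T.toLinearMap : Module.End ℝ V) ^ n) v‖)
        Filter.atTop (nhds (Real.log χ)) := by
  by_cases hv0 : v = 0
  · exact Or.inl hv0
  right
  set f : Module.End ℝ V := T.toLinearMap with hf
  set q : Polynomial ℝ := p ^ m with hq
  have hm : m ≠ 0 := by
    rintro rfl
    apply hv0
    simpa [hq] using hv
  set W : Submodule ℝ V := LinearMap.ker (Polynomial.aeval f q) with hWdef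
  have hvW : v ∈ W := by
    simp only [hWdef, LinearMap.mem_ker, hq, map_pow]
    simpa using hv
  -- commutation of f with aeval f q
  have hcomm : ∀ x : V, Polynomial.aeval f q (f x) = f (Polynomial.aeval f q x) := by
    intro x
    have h1 : Polynomial.aeval f q * f = Polynomial.aeval f (q * X) := by
      rw [map_mul, Polynomial.aeval_X]
    have h2 : f * Polynomial.aeval f q = Polynomial.aeval f (X * q) := by
      rw [map_mul, Polynomial.aeval_X]
    have : Polynomial.aeval f q * f = f * Polynomial.aeval f q := by
      rw [h1, h2, mul_comm q X]
    exact LinearMap.congr_fun this x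
  have hW : ∀ x ∈ W, f x ∈ W := by
    intro x hx
    simp only [hWdef, LinearMap.mem_ker] at hx ⊢
    rw [hcomm, hx, map_zero]
  have hW' : ∀ x ∈ W, T.symm.toLinearMap x ∈ W := by
    intro x hx
    simp only [hWdef, LinearMap.mem_ker] at hx ⊢
    have key : f (Polynomial.aeval f q (T.symm.toLinearMap x)) = Polynomial.aeval f q x := by
      rw [← hcomm]
      congr 1
      exact T.apply_symm_apply x
    apply T.injective
    rw [map_zero]
    rw [show (T : V → V) (Polynomial.aeval f q (T.symm.toLinearMap x))
        = f (Polynomial.aeval f q (T.symm.toLinearMap x)) from rfl, key, hx]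
  set S : Module.End ℝ W := f.restrict hW with hS
  set S' : Module.End ℝ W := T.symm.toLinearMap.restrict hW' with hS'
  have hSS' : S * S' = 1 := by
    ext w
    exact T.apply_symm_apply _
  have hS'S : S' * S = 1 := by
    ext w
    exact T.symm_apply_apply _
  -- aeval of restriction
  have haeval : ∀ (r : Polynomial ℝ) (x : W),
      ((Polynomial.aeval S r x : W) : V) = Polynomial.aeval f r (x : V) := by
    intro r x
    induction r using Polynomial.induction_on' with
    | add a b ha hb => simp [map_add, ha, hb]
    | monomial k a =>
      simp only [Polynomial.aeval_monomial]
      have hpow : ∀ k : ℕ, ((S ^ k) x : V) = (f ^ k) (x : V) := by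
        intro k
        rw [Module.End.pow_restrict]
        rfl
      simp [Module.algebraMap_end_apply, hpow]
  have hqS : Polynomial.aeval S q = 0 := by
    ext x
    have hx : Polynomial.aeval f q (x : V) = 0 := x.2
    have := haeval q x
    rw [hx] at this
    exact this
  -- v ≠ 0 gives nontrivial W
  set vW : W := ⟨v, hvW⟩ with hvWdef
  have hvW0 : vW ≠ 0 := by
    intro h
    apply hv0
    simpa [hvWdef] using congrArg Subtype.val h
  have : Nontrivial W := ⟨vW, 0, hvW0⟩
  -- basis and matrices
  set d : ℕ := Module.finrank ℝ W with hd
  have hd0 : 0 < d := Module.finrank_pos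
  haveI : Nonempty (Fin d) := ⟨⟨0, hd0⟩⟩
  set b : Module.Basis (Fin d) ℝ W := Module.finBasis ℝ W with hb
  set Φ : Module.End ℝ W →ₐ[ℝ] Matrix (Fin d) (Fin d) ℂ :=
    (AlgHom.mapMatrix (Algebra.ofId ℝ ℂ)).comp (LinearMap.toMatrixAlgEquiv b).toAlgHom with hΦ
  have hΦinj : Function.Injective Φ := by
    intro x y hxy
    apply (LinearMap.toMatrixAlgEquiv b).injective
    ext i j
    apply (algebraMap ℝ ℂ).injective
    have h2 : Φ x i j = Φ y i j := by rw [hxy]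
    simpa [hΦ, AlgHom.mapMatrix_apply, Matrix.map_apply, Algebra.ofId_apply] using h2
  set Aℂ : Matrix (Fin d) (Fin d) ℂ := Φ S with hA
  set Bℂ : Matrix (Fin d) (Fin d) ℂ := Φ S' with hB
  have hAB : Aℂ * Bℂ = 1 := by rw [hA, hB, ← map_mul, hSS', map_one]
  have hBA : Bℂ * Aℂ = 1 := by rw [hA, hB, ← map_mul, hS'S, map_one]
  set uA : (Matrix (Fin d) (Fin d) ℂ)ˣ := ⟨Aℂ, Bℂ, hAB, hBA⟩ with huA
  -- transfer to an endomorphism of ℂ^d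
  set e : Matrix (Fin d) (Fin d) ℂ ≃ₐ[ℂ] Module.End ℂ (Fin d → ℂ) :=
    Matrix.toLinAlgEquiv (Pi.basisFun ℂ (Fin d)) with he
  set ψ : Module.End ℝ W →ₐ[ℝ] Module.End ℂ (Fin d → ℂ) :=
    ((AlgEquiv.restrictScalars ℝ e).toAlgHom).comp Φ with hψ
  have h0ℝ : Polynomial.aeval (ψ S) q = 0 := by
    rw [Polynomial.aeval_algHom_apply, hqS, map_zero]
  have hψS : ψ S = e Aℂ := rfl
  have h0 : Polynomial.aeval (e Aℂ) (q.map (algebraMap ℝ ℂ)) = 0 := by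
    rw [Polynomial.aeval_map_algebraMap, ← hψS, h0ℝ]
  have hmdvd : minpoly ℂ (e Aℂ) ∣ (p.map (algebraMap ℝ ℂ)) ^ m := by
    have := minpoly.dvd ℂ (e Aℂ) h0
    rwa [hq, Polynomial.map_pow] at this
  have hspecA : ∀ z ∈ spectrum ℂ Aℂ, ‖z‖ = χ := by
    intro z hz
    have hz' : z ∈ spectrum ℂ (e Aℂ) := by rwa [AlgEquiv.spectrum_eq]
    have heig : Module.End.HasEigenvalue (e Aℂ) z :=
      Module.End.hasEigenvalue_iff_mem_spectrum.mpr hz'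
    have hroot : (minpoly ℂ (e Aℂ)).IsRoot z := Module.End.hasEigenvalue_iff_isRoot.mp heig
    obtain ⟨c, hc⟩ := hmdvd
    have hz2 : ((p.map (algebraMap ℝ ℂ)) ^ m).IsRoot z := by
      have h3 : Polynomial.eval z (minpoly ℂ (e Aℂ)) = 0 := hroot
      rw [hc, Polynomial.IsRoot, Polynomial.eval_mul, h3, zero_mul]
    apply hroots
    have := hz2
    rw [Polynomial.IsRoot, Polynomial.eval_pow] at this
    exact pow_eq_zero_iff hm |>.mp this
  have hspecne : (spectrum ℂ Aℂ).Nonempty := spectrum.nonempty Aℂ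
  have hradA : spectralRadius ℂ Aℂ = ENNReal.ofReal χ := by
    rw [spectralRadius]
    apply le_antisymm
    · apply iSup₂_le
      intro z hz
      rw [← enorm_eq_nnnorm, ← ofReal_norm, hspecA z hz]
    · obtain ⟨z, hz⟩ := hspecne
      have hzv : ENNReal.ofReal χ = (‖z‖₊ : ℝ≥0∞) := by
        rw [← enorm_eq_nnnorm, ← ofReal_norm, hspecA z hz]
      rw [hzv]
      exact le_iSup₂ (f := fun z (_ : z ∈ spectrum ℂ Aℂ) => (‖z‖₊ : ℝ≥0∞)) z hz
  -- spectrum of the inverse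
  have hspecB : ∀ z ∈ spectrum ℂ Bℂ, ‖z‖ = χ⁻¹ := by
    intro z hz
    have hzB : z ∈ spectrum ℂ ((uA⁻¹ : (Matrix (Fin d) (Fin d) ℂ)ˣ) : Matrix (Fin d) (Fin d) ℂ) := hz
    have hz0 : z ≠ 0 := by
      intro h
      rw [h] at hzB
      exact spectrum.zero_notMem ℂ (uA⁻¹).isUnit hzB
    set zu : ℂˣ := Units.mk0 z hz0 with hzu
    have : ((zu⁻¹ : ℂˣ) : ℂ) ∈ spectrum ℂ (uA : Matrix (Fin d) (Fin d) ℂ) := by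
      apply spectrum.inv_mem_iff.mpr
      simpa [hzu] using hzB
    have habs := hspecA _ this
    have : ‖z⁻¹‖ = χ := by simpa [hzu] using habs
    rw [← this, norm_inv, inv_inv]
  have hradB : spectralRadius ℂ Bℂ = ENNReal.ofReal χ⁻¹ := by
    rw [spectralRadius]
    apply le_antisymm
    · apply iSup₂_le
      intro z hz
      rw [← enorm_eq_nnnorm, ← ofReal_norm, hspecB z hz]
    · obtain ⟨z, hz⟩ := spectrum.nonempty Bℂ
      have hzv : ENNReal.ofReal χ⁻¹ = (‖z‖₊ : ℝ≥0∞) := by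
        rw [← enorm_eq_nnnorm, ← ofReal_norm, hspecB z hz]
      rw [hzv]
      exact le_iSup₂ (f := fun z (_ : z ∈ spectrum ℂ Bℂ) => (‖z‖₊ : ℝ≥0∞)) z hz
  have hApow : ∀ n : ℕ, Aℂ ^ n ≠ 0 := by
    intro n
    exact ((uA.isUnit).pow n).ne_zero
  have hBpow : ∀ n : ℕ, Bℂ ^ n ≠ 0 := by
    intro n
    have hBu : IsUnit Bℂ := (uA⁻¹).isUnit
    exact (hBu.pow n).ne_zero
  have hgelA := aux_gelfand_log Aℂ hApow χ hχ hradA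
  have hgelB := aux_gelfand_log Bℂ hBpow χ⁻¹ (inv_pos.mpr hχ) hradB
  rw [Real.log_inv] at hgelB
  -- norm comparison between endomorphisms of W and complex matrices
  haveI : FiniteDimensional ℝ (W →L[ℝ] W) :=
    (LinearMap.toContinuousLinearMap :
      (Module.End ℝ W) ≃ₗ[ℝ] ((W : Type _) →L[ℝ] W)).finiteDimensional
  set ψn : ((W : Type _) →L[ℝ] W) →ₗ[ℝ] Matrix (Fin d) (Fin d) ℂ :=
    Φ.toLinearMap.comp
      ((LinearMap.toContinuousLinearMap :
        (Module.End ℝ W) ≃ₗ[ℝ] ((W : Type _) →L[ℝ] W)).symm.toLinearMap) with hψn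
  have hψninj : Function.Injective ψn := by
    intro x y hxy
    have h2 := hΦinj hxy
    exact (LinearMap.toContinuousLinearMap :
      (Module.End ℝ W) ≃ₗ[ℝ] ((W : Type _) →L[ℝ] W)).symm.injective h2
  obtain ⟨C, hC0, hC⟩ := aux_inj_bound (E := (W →L[ℝ] W)) (F := Matrix (Fin d) (Fin d) ℂ) ψn hψninj
  have hNorm : ∀ g : Module.End ℝ W, ‖LinearMap.toContinuousLinearMap g‖ ≤ C * ‖Φ g‖ := by
    intro g
    have h2 := hC (LinearMap.toContinuousLinearMap g)
    simpa [hψn, LinearEquiv.symm_apply_apply] using h2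
  have hSpow : ∀ n : ℕ, ((( S ^ n) vW : W) : V) = (f ^ n) v := by
    intro n
    rw [hS, Module.End.pow_restrict]
    rfl
  have hv_pos : 0 < ‖v‖ := norm_pos_iff.mpr hv0
  have hA_pos : ∀ n : ℕ, 0 < ‖Aℂ ^ n‖ := fun n => norm_pos_iff.mpr (hApow n)
  have hB_pos : ∀ n : ℕ, 0 < ‖Bℂ ^ n‖ := fun n => norm_pos_iff.mpr (hBpow n)
  have hub : ∀ n : ℕ, ‖(f ^ n) v‖ ≤ C * ‖Aℂ ^ n‖ * ‖v‖ := by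
    intro n
    have h1 : ‖(f ^ n) v‖ = ‖(S ^ n) vW‖ := by rw [← hSpow n]; rfl
    have h2 : ‖(S ^ n) vW‖ ≤ ‖LinearMap.toContinuousLinearMap (S ^ n)‖ * ‖vW‖ := by
      have h3 := (LinearMap.toContinuousLinearMap (S ^ n)).le_opNorm vW
      simpa [LinearMap.coe_toContinuousLinearMap'] using h3
    have h3 := hNorm (S ^ n)
    rw [map_pow Φ S n, ← hA] at h3
    have hvWn : ‖vW‖ = ‖v‖ := rfl
    rw [h1]
    calc ‖(S ^ n) vW‖ ≤ ‖LinearMap.toContinuousLinearMap (S ^ n)‖ * ‖vW‖ := h2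
      _ ≤ (C * ‖Aℂ ^ n‖) * ‖vW‖ := by
          apply mul_le_mul_of_nonneg_right h3 (norm_nonneg _)
      _ = C * ‖Aℂ ^ n‖ * ‖v‖ := by rw [hvWn]
  have hcommS : Commute S' S := by
    rw [Commute, SemiconjBy, hS'S, hSS']
  have hS'Spow : ∀ n : ℕ, (S' ^ n) ((S ^ n) vW) = vW := by
    intro n
    have h1 : (S' ^ n) * (S ^ n) = 1 := by rw [← hcommS.mul_pow, hS'S, one_pow]
    calc (S' ^ n) ((S ^ n) vW) = ((S' ^ n) * (S ^ n)) vW := rfl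
      _ = vW := by rw [h1]; rfl
  have hlb : ∀ n : ℕ, ‖v‖ ≤ C * ‖Bℂ ^ n‖ * ‖(f ^ n) v‖ := by
    intro n
    have h1 : ‖v‖ = ‖(S' ^ n) ((S ^ n) vW)‖ := by rw [hS'Spow]; rfl
    have h2 : ‖(S' ^ n) ((S ^ n) vW)‖ ≤
        ‖LinearMap.toContinuousLinearMap (S' ^ n)‖ * ‖(S ^ n) vW‖ := by
      have h3 := (LinearMap.toContinuousLinearMap (S' ^ n)).le_opNorm ((S ^ n) vW)
      simpa [LinearMap.coe_toContinuousLinearMap'] using h3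
    have h3 := hNorm (S' ^ n)
    rw [map_pow Φ S' n, ← hB] at h3
    have h4 : ‖(S ^ n) vW‖ = ‖(f ^ n) v‖ := by rw [← hSpow n]; rfl
    rw [h1]
    calc ‖(S' ^ n) ((S ^ n) vW)‖
        ≤ ‖LinearMap.toContinuousLinearMap (S' ^ n)‖ * ‖(S ^ n) vW‖ := h2
      _ ≤ (C * ‖Bℂ ^ n‖) * ‖(S ^ n) vW‖ := by
          apply mul_le_mul_of_nonneg_right h3 (norm_nonneg _)
      _ = C * ‖Bℂ ^ n‖ * ‖(f ^ n) v‖ := by rw [h4]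
  have hfv_pos : ∀ n : ℕ, 0 < ‖(f ^ n) v‖ := by
    intro n
    rcases (norm_nonneg ((f ^ n) v)).lt_or_eq with h | h
    · exact h
    · exfalso
      have := hlb n
      rw [← h, mul_zero] at this
      linarith
  -- the squeeze
  have ht0 : ∀ c : ℝ, Tendsto (fun n : ℕ => (1/(n:ℝ)) * c) atTop (nhds 0) := by
    intro c
    simpa using tendsto_one_div_atTop_nhds_zero_nat.mul_const c
  have hubtend : Tendsto (fun n : ℕ => (1/(n:ℝ)) * Real.log C + (1/(n:ℝ)) * Real.log ‖Aℂ ^ n‖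
      + (1/(n:ℝ)) * Real.log ‖v‖) atTop (nhds (Real.log χ)) := by
    have h := ((ht0 (Real.log C)).add hgelA).add (ht0 (Real.log ‖v‖))
    simpa using h
  have hlbtend : Tendsto (fun n : ℕ => (1/(n:ℝ)) * Real.log ‖v‖ - (1/(n:ℝ)) * Real.log C
      - (1/(n:ℝ)) * Real.log ‖Bℂ ^ n‖) atTop (nhds (Real.log χ)) := by
    have h := ((ht0 (Real.log ‖v‖)).sub (ht0 (Real.log C))).sub hgelB
    simpa using h
  refine tendsto_of_tendsto_of_tendsto_of_le_of_le hlbtend hubtend (fun n => ?_) (fun n => ?_)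
  · -- lower bound
    have hlog : Real.log ‖v‖ ≤ Real.log C + Real.log ‖Bℂ ^ n‖ + Real.log ‖(f ^ n) v‖ := by
      have h1 : Real.log ‖v‖ ≤ Real.log (C * ‖Bℂ ^ n‖ * ‖(f ^ n) v‖) :=
        Real.log_le_log hv_pos (hlb n)
      rwa [Real.log_mul (mul_pos hC0 (hB_pos n)).ne' (hfv_pos n).ne',
        Real.log_mul hC0.ne' (hB_pos n).ne'] at h1
    have hmul := mul_le_mul_of_nonneg_left hlog (by positivity : (0:ℝ) ≤ 1/(n:ℝ))
    rw [mul_add, mul_add] at hmul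
    linarith
  · -- upper bound
    have hlog : Real.log ‖(f ^ n) v‖ ≤ Real.log C + Real.log ‖Aℂ ^ n‖ + Real.log ‖v‖ := by
      have h1 : Real.log ‖(f ^ n) v‖ ≤ Real.log (C * ‖Aℂ ^ n‖ * ‖v‖) :=
        Real.log_le_log (hfv_pos n) (hub n)
      rwa [Real.log_mul (mul_pos hC0 (hA_pos n)).ne' hv_pos.ne',
        Real.log_mul hC0.ne' (hA_pos n).ne'] at h1
    have hmul := mul_le_mul_of_nonneg_left hlog (by positivity : (0:ℝ) ≤ 1/(n:ℝ))
    rw [mul_add, mul_add] at hmul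
    linarith
end

section
/- Let T : V → V be a linear automorphism of a finite-dimensional real vector space, and v ∈ V a nonzero vector lying in the generalized eigenspace (primary component) associated to eigenvalue absolute value χ > 0. Then lim_{n→∞} (1/n) log ‖Tⁿ v‖ = log χ. -/
open Polynomial Finset Filter


private lemma sum_modByMonic' {R : Type*} [CommRing R] (q : R[X]) (f : ℕ → R[X]) (t : Finset ℕ) :
    (∑ k ∈ t, f k) %ₘ q = ∑ k ∈ t, (f k) %ₘ q :=
  map_sum (Polynomial.modByMonicHom q) f t

/-- Decomposition of `X^n mod (X - z) * q'`. -/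
private lemma modByMonic_mul_linear (z : ℂ) (q' : ℂ[X]) (hq' : q'.Monic) (n : ℕ) :
    (X : ℂ[X]) ^ n %ₘ ((X - C z) * q') =
      (X - C z) * ((∑ k ∈ range n, X ^ k * C z ^ (n - 1 - k)) %ₘ q') + C z ^ n := by
  set s : ℂ[X] := ∑ k ∈ range n, X ^ k * C z ^ (n - 1 - k) with hs
  have hgeom : s * (X - C z) = X ^ n - C z ^ n := geom_sum₂_mul (X : ℂ[X]) (C z) n
  have h2 : s %ₘ q' + q' * (s /ₘ q') = s := modByMonic_add_div s q'
  have hQ : ((X - C z) * q').Monic := (monic_X_sub_C z).mul hq'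
  have key : (X : ℂ[X]) ^ n =
      ((X - C z) * (s %ₘ q') + C z ^ n) + ((X - C z) * q') * (s /ₘ q') := by
    linear_combination -hgeom - (X - C z) * h2
  rw [key, add_modByMonic, self_mul_modByMonic hQ, add_zero,
    (modByMonic_eq_self_iff hQ).2]
  have hq'0 : (0 : WithBot ℕ) ≤ q'.degree := zero_le_degree_iff.mpr hq'.ne_zero
  have hdegQ : ((X - C z) * q').degree = 1 + q'.degree := by
    rw [degree_mul, degree_X_sub_C]
  refine lt_of_le_of_lt (degree_add_le _ _) (max_lt ?_ ?_)
  · rw [degree_mul, degree_X_sub_C, hdegQ]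
    exact WithBot.add_lt_add_left (by simp) (degree_modByMonic_lt s hq')
  · have h1 : (C z ^ n : ℂ[X]).degree ≤ 0 := by rw [← C_pow]; exact degree_C_le
    have h2 : (0 : WithBot ℕ) < ((X - C z) * q').degree := by
      rw [hdegQ]
      calc (0 : WithBot ℕ) < 1 := by norm_num
        _ = 1 + 0 := by rw [add_zero]
        _ ≤ 1 + q'.degree := add_le_add_right hq'0 _
    exact lt_of_le_of_lt h1 h2

private lemma complex_coeff_bound(χ : ℝ) (hχ : 0 < χ) (d : ℕ) :
    ∃ K : ℝ, 1 ≤ K ∧ ∀ q : ℂ[X], q.Monic → q.natDegree = d →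
      (∀ z : ℂ, q.IsRoot z → ‖z‖ ≤ χ) →
      ∀ n i : ℕ, ‖((X : ℂ[X]) ^ n %ₘ q).coeff i‖ ≤ K * ((n : ℝ) + 1) ^ d * χ ^ n := by
  induction d with
  | zero =>
    refine ⟨1, le_rfl, fun q hq hdq _ n i => ?_⟩
    rw [hq.natDegree_eq_zero.mp hdq, modByMonic_one]
    simp [le_of_lt (pow_pos hχ n)]
  | succ d ih =>
    obtain ⟨K, hC1, hC⟩ := ih
    have hC0 : (0:ℝ) < K := lt_of_lt_of_le one_pos hC1
    refine ⟨(1 + χ) / χ * K + 1, ?_, ?_⟩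
    · have : 0 ≤ (1 + χ) / χ * K := by positivity
      linarith
    intro q hq hdq hroots n i
    -- find a root and factor
    have hdeg : q.degree = ((d + 1 : ℕ) : WithBot ℕ) := by
      rw [degree_eq_natDegree hq.ne_zero, hdq]
    obtain ⟨z, hz⟩ := IsAlgClosed.exists_root q (by rw [hdeg]; exact_mod_cast by simp)
    have hzabs : ‖z‖ ≤ χ := hroots z hz
    set q' : ℂ[X] := q /ₘ (X - C z) with hq'def
    have hfact : (X - C z) * q' = q := (mul_divByMonic_eq_iff_isRoot).mpr hz
    have hq' : q'.Monic := (monic_X_sub_C z).of_mul_monic_left (hfact.symm ▸ hq)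
    have hdq' : q'.natDegree = d := by
      have h : ((X - Polynomial.C z) * q').natDegree = d + 1 := by rw [hfact, hdq]
      rw [natDegree_mul (X_sub_C_ne_zero z) hq'.ne_zero, natDegree_X_sub_C] at h
      omega
    have hq'roots : ∀ w : ℂ, q'.IsRoot w → ‖w‖ ≤ χ := by
      intro w hw
      exact hroots w (by rw [IsRoot, ← hfact, eval_mul, hw, mul_zero])
    have hone : (1:ℝ) ≤ ((n : ℝ) + 1) ^ (d + 1) :=
      one_le_pow₀ (by linarith [Nat.cast_nonneg (α := ℝ) n])
    -- handle n = 0 separately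
    rcases Nat.eq_zero_or_pos n with rfl | hn
    · have h1 : ((X : ℂ[X]) ^ 0 %ₘ q) = 1 := by
        rw [pow_zero, (modByMonic_eq_self_iff hq).2]
        rw [degree_one, hdeg]
        exact_mod_cast by norm_num
      rw [h1]
      rcases Nat.eq_zero_or_pos i with rfl | hi
      · simp only [coeff_one_zero, norm_one, pow_zero, mul_one]
        have h6 : (0:ℝ) ≤ (1 + χ) / χ * K := by positivity
        norm_num
        nlinarith
      · rw [coeff_one, if_neg (by omega)]
        simp only [norm_zero]
        positivity
    -- main case
    set s : ℂ[X] := ∑ k ∈ range n, X ^ k * C z ^ (n - 1 - k) with hsdef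
    set w : ℂ[X] := s %ₘ q' with hwdef
    have hdecomp : (X : ℂ[X]) ^ n %ₘ q = (X - C z) * w + C z ^ n := by
      rw [← hfact]; exact modByMonic_mul_linear z q' hq' n
    set B : ℝ := K * ((n : ℝ) + 1) ^ (d + 1) * χ ^ n with hBdef
    have hB : 0 ≤ B := by positivity
    -- bound on coefficients of w
    have hwb : ∀ j : ℕ, ‖w.coeff j‖ ≤ B / χ := by
      intro j
      have hw2 : w = ∑ k ∈ range n, z ^ (n - 1 - k) • ((X : ℂ[X]) ^ k %ₘ q') := by
        rw [hwdef, hsdef]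
        rw [sum_modByMonic' q' (fun k => X ^ k * C z ^ (n - 1 - k)) (range n)]
        refine Finset.sum_congr rfl fun k _ => ?_
        rw [← C_pow, mul_comm, ← smul_eq_C_mul, smul_modByMonic]
      have hn1 : χ ^ (n - 1) = χ ^ n / χ := by
        rw [eq_div_iff hχ.ne', ← pow_succ]
        congr 1
        omega
      rw [hw2, finset_sum_coeff]
      calc ‖∑ k ∈ range n, (z ^ (n - 1 - k) • ((X : ℂ[X]) ^ k %ₘ q')).coeff j‖
          ≤ ∑ k ∈ range n, ‖(z ^ (n - 1 - k) • ((X : ℂ[X]) ^ k %ₘ q')).coeff j‖ :=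
            norm_sum_le _ _
        _ ≤ ∑ _k ∈ range n, K * ((n : ℝ) + 1) ^ d * χ ^ (n - 1) := by
            refine Finset.sum_le_sum fun k hk => ?_
            have hkn : k < n := mem_range.mp hk
            rw [coeff_smul, smul_eq_mul, norm_mul, norm_pow]
            have h1 : ‖z‖ ^ (n - 1 - k) ≤ χ ^ (n - 1 - k) :=
              pow_le_pow_left₀ (norm_nonneg z) hzabs _
            have h2 := hC q' hq' hdq' hq'roots k j
            calc ‖z‖ ^ (n - 1 - k) * ‖((X : ℂ[X]) ^ k %ₘ q').coeff j‖
                ≤ χ ^ (n - 1 - k) * (K * ((k : ℝ) + 1) ^ d * χ ^ k) := by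
                  exact mul_le_mul h1 h2 (norm_nonneg _) (pow_nonneg hχ.le _)
              _ ≤ χ ^ (n - 1 - k) * (K * ((n : ℝ) + 1) ^ d * χ ^ k) := by
                  gcongr
              _ = K * ((n : ℝ) + 1) ^ d * (χ ^ (n - 1 - k) * χ ^ k) := by ring
              _ = K * ((n : ℝ) + 1) ^ d * χ ^ (n - 1) := by
                  rw [← pow_add]
                  congr 2
                  omega
        _ = (n : ℝ) * (K * ((n : ℝ) + 1) ^ d * χ ^ (n - 1)) := by
            rw [Finset.sum_const, Finset.card_range, nsmul_eq_mul]
        _ ≤ ((n : ℝ) + 1) * (K * ((n : ℝ) + 1) ^ d * χ ^ (n - 1)) := by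
            gcongr
            linarith
        _ = B / χ := by rw [hn1, hBdef]; ring
    -- final bound
    rw [hdecomp]
    have hzn : ‖z ^ n‖ ≤ χ ^ n := by
      rw [norm_pow]; exact pow_le_pow_left₀ (norm_nonneg z) hzabs n
    have h3 : B ≤ (1 + χ) / χ * B := le_mul_of_one_le_left hB ((one_le_div hχ).mpr (by linarith))
    have h4 : χ ^ n ≤ ((n : ℝ) + 1) ^ (d + 1) * χ ^ n :=
      le_mul_of_one_le_left (pow_nonneg hχ.le n) hone
    have hexp : ((1 + χ) / χ * K + 1) * ((n : ℝ) + 1) ^ (d + 1) * χ ^ n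
        = (1 + χ) / χ * B + ((n : ℝ) + 1) ^ (d + 1) * χ ^ n := by rw [hBdef]; ring
    have hcoeff : (((X - C z) * w + C z ^ n).coeff i)
        = (X * w).coeff i - z * w.coeff i + (C z ^ n).coeff i := by
      rw [coeff_add, sub_mul, coeff_sub, coeff_C_mul]
    rw [hcoeff, hexp]
    rcases i with _ | j
    · rw [mul_coeff_zero, coeff_X_zero, zero_mul, zero_sub, ← C_pow, coeff_C_zero]
      calc ‖-(z * w.coeff 0) + z ^ n‖
          ≤ ‖-(z * w.coeff 0)‖ + ‖z ^ n‖ := norm_add_le _ _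
        _ = ‖z‖ * ‖w.coeff 0‖ + ‖z ^ n‖ := by
            rw [norm_neg, norm_mul]
        _ ≤ χ * (B / χ) + χ ^ n := by
            have hc1 : ‖z‖ * ‖w.coeff 0‖ ≤ χ * (B / χ) :=
              mul_le_mul hzabs (hwb 0) (norm_nonneg _) hχ.le
            linarith
        _ = B + χ ^ n := by field_simp
        _ ≤ (1 + χ) / χ * B + ((n : ℝ) + 1) ^ (d + 1) * χ ^ n := by linarith
    · rw [coeff_X_mul, ← C_pow, coeff_C, if_neg (by omega), add_zero]
      calc ‖w.coeff j - z * w.coeff (j + 1)‖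
          ≤ ‖w.coeff j‖ + ‖-(z * w.coeff (j + 1))‖ := by
            rw [sub_eq_add_neg]; exact norm_add_le _ _
        _ = ‖w.coeff j‖ + ‖z‖ * ‖w.coeff (j + 1)‖ := by
            rw [norm_neg, norm_mul]
        _ ≤ B / χ + χ * (B / χ) := by
            have hc1 : ‖z‖ * ‖w.coeff (j + 1)‖ ≤ χ * (B / χ) :=
              mul_le_mul hzabs (hwb (j + 1)) (norm_nonneg _) hχ.le
            have := hwb j
            linarith
        _ = (1 + χ) / χ * B := by field_simp
        _ ≤ (1 + χ) / χ * B + ((n : ℝ) + 1) ^ (d + 1) * χ ^ n := by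
            have : (0:ℝ) ≤ ((n : ℝ) + 1) ^ (d + 1) * χ ^ n := by positivity
            linarith

/-- Evaluating the reverse of `q` at an inverse element. -/
private lemma aeval_reverse_of_inverse {B : Type*} [Ring B] [Algebra ℝ B]
    (A S : B) (hSA : S * A = 1) (hAS : A * S = 1) (q : ℝ[X]) :
    Polynomial.aeval S q.reverse = S ^ q.natDegree * Polynomial.aeval A q := by
  have hcomm : Commute S A := by
    unfold Commute SemiconjBy
    rw [hSA, hAS]
  have hpow : ∀ i : ℕ, i ≤ q.natDegree → S ^ q.natDegree * A ^ i = S ^ (q.natDegree - i) := by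
    intro i hi
    have h1 : S ^ i * A ^ i = 1 := by
      rw [← hcomm.mul_pow, hSA, one_pow]
    calc S ^ q.natDegree * A ^ i = S ^ (q.natDegree - i) * (S ^ i * A ^ i) := by
          rw [← mul_assoc, ← pow_add]
          congr 2
          omega
      _ = S ^ (q.natDegree - i) := by rw [h1, mul_one]
  have hrevdeg : q.reverse.natDegree < q.natDegree + 1 :=
    lt_of_le_of_lt q.reverse_natDegree_le (Nat.lt_succ_self _)
  rw [aeval_eq_sum_range' hrevdeg S, aeval_eq_sum_range' (Nat.lt_succ_self _) A, Finset.mul_sum]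
  have hcoeffrev : ∀ j : ℕ, j ≤ q.natDegree → q.reverse.coeff j = q.coeff (q.natDegree - j) := by
    intro j hj
    rw [Polynomial.reverse, Polynomial.coeff_reflect, Polynomial.revAt_le hj]
  calc ∑ j ∈ range (q.natDegree + 1), q.reverse.coeff j • S ^ j
      = ∑ j ∈ range (q.natDegree + 1), q.coeff (q.natDegree - j) • S ^ j := by
        refine Finset.sum_congr rfl fun j hj => ?_
        rw [hcoeffrev j (by simpa [Nat.lt_succ_iff] using hj)]
    _ = ∑ j ∈ range (q.natDegree + 1), q.coeff j • S ^ (q.natDegree - j) := by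
        rw [← Finset.sum_range_reflect]
        refine Finset.sum_congr rfl fun j hj => ?_
        have hj' : j ≤ q.natDegree := by simpa [Nat.lt_succ_iff] using hj
        have e1 : q.natDegree + 1 - 1 - j = q.natDegree - j := by omega
        have e2 : q.natDegree - (q.natDegree - j) = j := by omega
        rw [e1, e2]
    _ = ∑ j ∈ range (q.natDegree + 1), S ^ q.natDegree * q.coeff j • A ^ j := by
        refine Finset.sum_congr rfl fun j hj => ?_
        have hj' : j ≤ q.natDegree := by simpa [Nat.lt_succ_iff] using hj
        rw [mul_smul_comm, hpow j hj']

/-- Norm growth bound for powers of an endomorphism on the kernel of `q(A)`. -/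
private lemma norm_aeval_pow_le
    {V : Type*} [NormedAddCommGroup V] [NormedSpace ℝ V] [FiniteDimensional ℝ V]
    (A : Module.End ℝ V) (q : Polynomial ℝ) (hq : q.Monic) (hd : 1 ≤ q.natDegree)
    {χ : ℝ} (hχ : 0 < χ)
    (hroots : ∀ z : ℂ, (q.map (algebraMap ℝ ℂ)).IsRoot z → ‖z‖ ≤ χ) :
    ∃ C : ℝ, 0 < C ∧ ∀ w ∈ LinearMap.ker (Polynomial.aeval A q), ∀ n : ℕ,
      ‖(A ^ n) w‖ ≤ C * ((n : ℝ) + 1) ^ q.natDegree * χ ^ n * ‖w‖ := by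
  set d := q.natDegree with hddef
  obtain ⟨K, hK1, hK⟩ := complex_coeff_bound χ hχ d
  -- real coefficient bound
  have hqc : (q.map (algebraMap ℝ ℂ)).Monic := hq.map _
  have hqcdeg : (q.map (algebraMap ℝ ℂ)).natDegree = d := by
    rw [q.natDegree_map_eq_of_injective (algebraMap ℝ ℂ).injective]
  have hcoeff : ∀ n i : ℕ, |((X : ℝ[X]) ^ n %ₘ q).coeff i| ≤ K * ((n : ℝ) + 1) ^ d * χ ^ n := by
    intro n i
    have hmap : (((X : ℝ[X]) ^ n %ₘ q).map (algebraMap ℝ ℂ))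
        = (X : ℂ[X]) ^ n %ₘ q.map (algebraMap ℝ ℂ) := by
      rw [Polynomial.map_modByMonic _ hq, Polynomial.map_pow, Polynomial.map_X]
    have h1 := hK (q.map (algebraMap ℝ ℂ)) hqc hqcdeg hroots n i
    rw [← hmap, Polynomial.coeff_map] at h1
    simpa [Complex.norm_real] using h1
  -- operator norm of A
  set Ac : V →L[ℝ] V := LinearMap.toContinuousLinearMap A with hAcdef
  have hApow : ∀ (i : ℕ) (w : V), ‖(A ^ i) w‖ ≤ ‖Ac‖ ^ i * ‖w‖ := by
    intro i
    induction i with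
    | zero => intro w; simp
    | succ i ih =>
      intro w
      have h1 : (A ^ (i + 1)) w = (A ^ i) (A w) := by
        rw [pow_succ, Module.End.mul_apply]
      rw [h1]
      calc ‖(A ^ i) (A w)‖ ≤ ‖Ac‖ ^ i * ‖A w‖ := ih (A w)
        _ ≤ ‖Ac‖ ^ i * (‖Ac‖ * ‖w‖) := by
            have : ‖A w‖ ≤ ‖Ac‖ * ‖w‖ := Ac.le_opNorm w
            exact mul_le_mul_of_nonneg_left this (by positivity)
        _ = ‖Ac‖ ^ (i + 1) * ‖w‖ := by ring
  set M : ℝ := ∑ i ∈ range d, ‖Ac‖ ^ i with hMdef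
  have hM1 : 1 ≤ M := by
    have h0 : (0:ℕ) ∈ range d := mem_range.mpr (by omega)
    have : (1:ℝ) = ‖Ac‖ ^ 0 := by simp
    rw [hMdef]
    calc (1:ℝ) = ‖Ac‖ ^ 0 := by simp
      _ ≤ ∑ i ∈ range d, ‖Ac‖ ^ i :=
        Finset.single_le_sum (fun i _ => by positivity) h0
  refine ⟨K * M, by nlinarith, ?_⟩
  intro w hw n
  have hwker : (Polynomial.aeval A q) w = 0 := hw
  -- A^n w = (X^n mod q)(A) w
  set r : ℝ[X] := (X : ℝ[X]) ^ n %ₘ q with hrdef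
  have hstep : (A ^ n) w = (Polynomial.aeval A r) w := by
    have hdiv : r + q * ((X : ℝ[X]) ^ n /ₘ q) = (X : ℝ[X]) ^ n := modByMonic_add_div _ q
    have h2 : (A ^ n) w = (Polynomial.aeval A (r + q * ((X : ℝ[X]) ^ n /ₘ q))) w := by
      rw [hdiv, map_pow, aeval_X]
    rw [h2, map_add, map_mul, LinearMap.add_apply]
    have h3 : (Polynomial.aeval A q * Polynomial.aeval A ((X : ℝ[X]) ^ n /ₘ q)) w
        = (Polynomial.aeval A ((X : ℝ[X]) ^ n /ₘ q)) ((Polynomial.aeval A q) w) := by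
      rw [← map_mul, mul_comm, map_mul]
      rfl
    rw [h3, hwker, map_zero, add_zero]
  have hq1 : q ≠ 1 := by
    intro h
    rw [hddef, h, natDegree_one] at hd
    omega
  have hrd : r.natDegree < d := natDegree_modByMonic_lt _ hq hq1
  -- expand into coefficients
  have hexpand : Polynomial.aeval A r = ∑ i ∈ range d, r.coeff i • A ^ i :=
    aeval_eq_sum_range' hrd A
  rw [hstep, hexpand]
  have happly : (∑ i ∈ range d, r.coeff i • A ^ i) w = ∑ i ∈ range d, r.coeff i • (A ^ i) w := by
    rw [LinearMap.sum_apply]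
    refine Finset.sum_congr rfl fun i _ => ?_
    rw [LinearMap.smul_apply]
  rw [happly]
  calc ‖∑ i ∈ range d, r.coeff i • (A ^ i) w‖
      ≤ ∑ i ∈ range d, ‖r.coeff i • (A ^ i) w‖ := norm_sum_le _ _
    _ ≤ ∑ i ∈ range d, K * ((n : ℝ) + 1) ^ d * χ ^ n * (‖Ac‖ ^ i * ‖w‖) := by
        refine Finset.sum_le_sum fun i _ => ?_
        rw [norm_smul, Real.norm_eq_abs]
        exact mul_le_mul (hcoeff n i) (hApow i w) (norm_nonneg _) (by positivity)
    _ = K * M * ((n : ℝ) + 1) ^ d * χ ^ n * ‖w‖ := by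
        rw [← Finset.mul_sum, ← Finset.sum_mul, ← hMdef]
        ring

/-- `(a + b log(n+1))/n → 0`. -/
private lemma aux_tendsto (a b : ℝ) :
    Tendsto (fun n : ℕ => (a + b * Real.log ((n : ℝ) + 1)) * (1 / (n : ℝ)))
      atTop (nhds 0) := by
  have h1 : Tendsto (fun n : ℕ => 1 / (n : ℝ)) atTop (nhds 0) :=
    tendsto_one_div_atTop_nhds_zero_nat
  have hlog : Tendsto (fun n : ℕ => Real.log ((n : ℝ) + 1) / ((n : ℝ) + 1)) atTop (nhds 0) :=
    (Real.isLittleO_log_id_atTop.tendsto_div_nhds_zero).comp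
      (tendsto_atTop_add_const_right atTop 1 tendsto_natCast_atTop_atTop)
  have hrat : Tendsto (fun n : ℕ => ((n : ℝ) + 1) * (1 / (n : ℝ))) atTop (nhds 1) := by
    have h2 : Tendsto (fun n : ℕ => 1 + 1 / (n : ℝ)) atTop (nhds 1) := by
      simpa using tendsto_const_nhds.add h1
    refine h2.congr' ?_
    filter_upwards [eventually_ge_atTop 1] with n hn
    have hn0 : (n : ℝ) ≠ 0 := by
      have : (1 : ℝ) ≤ (n : ℝ) := by exact_mod_cast hn
      linarith
    field_simp
  have h2 : Tendsto (fun n : ℕ => Real.log ((n : ℝ) + 1) * (1 / (n : ℝ))) atTop (nhds 0) := by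
    have h3 := hlog.mul hrat
    rw [zero_mul] at h3
    refine h3.congr fun n => ?_
    have hne : ((n : ℝ) + 1) ≠ 0 := by positivity
    field_simp
  have h4 := (h1.const_mul a).add (h2.const_mul b)
  rw [mul_zero, mul_zero, add_zero] at h4
  refine h4.congr fun n => ?_
  ring

/-- If `v ≠ 0` lies in the generalized eigenspace (primary component) of a linear
automorphism `T` associated to eigenvalue absolute value `χ > 0`, then the Lyapunov
exponent of `v` is `log χ`. -/
theorem lyapunov_exponent_of_generalized_eigenvector
    (V : Type*) [NormedAddCommGroup V] [NormedSpace ℝ V] [FiniteDimensional ℝ V]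
    (T : V ≃ₗ[ℝ] V) (p : Polynomial ℝ) (m : ℕ) (χ : ℝ) (hχ : 0 < χ)
    (hp : Irreducible p)
    (hroots : ∀ z : ℂ, (p.map (algebraMap ℝ ℂ)).IsRoot z → ‖z‖ = χ)
    (v : V) (hv0 : v ≠ 0)
    (hv : v ∈ LinearMap.ker ((Polynomial.aeval (T.toLinearMap : Module.End ℝ V) p) ^ m)) :
    Filter.Tendsto
      (fun n : ℕ => (1 / (n : ℝ)) * Real.log ‖((T.toLinearMap : Module.End ℝ V) ^ n) v‖)
      Filter.atTop (nhds (Real.log χ)) := by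
  set A : Module.End ℝ V := T.toLinearMap with hAdef
  set S : Module.End ℝ V := T.symm.toLinearMap with hSdef
  have hSA : S * A = 1 := by
    ext x
    simp [hAdef, hSdef, Module.End.mul_apply]
  have hAS : A * S = 1 := by
    ext x
    simp [hAdef, hSdef, Module.End.mul_apply]
  have hcomm : Commute S A := by
    unfold Commute SemiconjBy
    rw [hSA, hAS]
  -- m is positive
  rcases Nat.eq_zero_or_pos m with rfl | hm
  · exfalso
    apply hv0
    simpa using LinearMap.mem_ker.mp hv
  have hpne : p ≠ 0 := hp.ne_zero
  have hlc : p.leadingCoeff ≠ 0 := leadingCoeff_ne_zero.mpr hpne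
  set q : ℝ[X] := (p * Polynomial.C p.leadingCoeff⁻¹) ^ m with hqdef
  have hqmonic : q.Monic := (monic_mul_leadingCoeff_inv hpne).pow m
  have hpdeg : 1 ≤ p.natDegree := natDegree_pos_iff_degree_pos.mpr (degree_pos_of_irreducible hp)
  have hCne : Polynomial.C p.leadingCoeff⁻¹ ≠ 0 := by
    simpa using inv_ne_zero hlc
  have hqdeg : q.natDegree = m * p.natDegree := by
    rw [hqdef, natDegree_pow, natDegree_mul hpne hCne, natDegree_C, add_zero]
  have hd1 : 1 ≤ q.natDegree := by
    rw [hqdeg]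
    calc 1 = 1 * 1 := (one_mul 1).symm
      _ ≤ m * p.natDegree := Nat.mul_le_mul hm hpdeg
  set d := q.natDegree with hddef
  -- v lies in the kernel of q(A)
  have hq2 : q = Polynomial.C (p.leadingCoeff⁻¹ ^ m) * p ^ m := by
    rw [hqdef, mul_pow, ← C_pow, mul_comm]
  have hv' : ((Polynomial.aeval A p) ^ m) v = 0 := LinearMap.mem_ker.mp hv
  have h9 : (Polynomial.aeval A (p ^ m)) v = 0 := by
    rw [map_pow]; exact hv'
  have hvker : (Polynomial.aeval A q) v = 0 := by
    rw [hq2, map_mul, Module.End.mul_apply, h9, map_zero]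
  have hvmem : v ∈ LinearMap.ker (Polynomial.aeval A q) := LinearMap.mem_ker.mpr hvker
  -- roots of q over ℂ have modulus exactly χ
  have hqroots : ∀ z : ℂ, (q.map (algebraMap ℝ ℂ)).IsRoot z → ‖z‖ = χ := by
    intro z hz
    apply hroots
    rw [IsRoot, hqdef, Polynomial.map_pow, Polynomial.map_mul, Polynomial.map_C,
      eval_pow, eval_mul, eval_C] at hz
    have h5 := pow_eq_zero_iff (by omega : m ≠ 0) |>.mp hz
    rcases mul_eq_zero.mp h5 with h6 | h6
    · exact h6
    · exfalso
      exact (map_ne_zero_iff _ (algebraMap ℝ ℂ).injective).mpr (inv_ne_zero hlc) h6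
  -- the constant coefficient of q is nonzero
  have hc0 : q.coeff 0 ≠ 0 := by
    intro h
    have hroot0 : (q.map (algebraMap ℝ ℂ)).IsRoot 0 := by
      rw [IsRoot, eval_zero_map, ← coeff_zero_eq_eval_zero, h, map_zero]
    have h7 := hqroots 0 hroot0
    rw [norm_zero] at h7
    exact hχ.ne h7
  set c0 : ℝ := q.coeff 0 with hc0def
  set qr : ℝ[X] := Polynomial.C c0⁻¹ * q.reverse with hqrdef
  have htrail : q.natTrailingDegree = 0 := natTrailingDegree_eq_zero.mpr (Or.inr hc0)
  have htc : q.trailingCoeff = c0 := by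
    rw [trailingCoeff, htrail]
  have hqrmonic : qr.Monic := by
    rw [Monic, hqrdef, leadingCoeff_mul, leadingCoeff_C, reverse_leadingCoeff, htc]
    exact inv_mul_cancel₀ hc0
  have hqrdeg : qr.natDegree = d := by
    rw [hqrdef, natDegree_C_mul (inv_ne_zero hc0), reverse_natDegree, htrail, Nat.sub_zero]
  -- roots of qr over ℂ have modulus at most χ⁻¹
  have hmaprev : q.reverse.map (algebraMap ℝ ℂ) = (q.map (algebraMap ℝ ℂ)).reverse := by
    rw [Polynomial.reverse, Polynomial.reverse, reflect_map,
      q.natDegree_map_eq_of_injective (algebraMap ℝ ℂ).injective]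
  have hqrroots : ∀ z : ℂ, (qr.map (algebraMap ℝ ℂ)).IsRoot z → ‖z‖ ≤ χ⁻¹ := by
    intro z hz
    rw [IsRoot, hqrdef, Polynomial.map_mul, Polynomial.map_C, eval_mul, eval_C, hmaprev] at hz
    have hz' : ((q.map (algebraMap ℝ ℂ)).reverse).eval z = 0 := by
      rcases mul_eq_zero.mp hz with h6 | h6
      · exact absurd h6 ((map_ne_zero_iff _ (algebraMap ℝ ℂ).injective).mpr (inv_ne_zero hc0))
      · exact h6
    have hz0 : z ≠ 0 := by
      intro h
      rw [h, ← coeff_zero_eq_eval_zero, coeff_zero_reverse] at hz'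
      exact one_ne_zero ((hqmonic.map (algebraMap ℝ ℂ)).leadingCoeff ▸ hz')
    haveI : Invertible (z⁻¹) := invertibleOfNonzero (inv_ne_zero hz0)
    have hiff := Polynomial.eval₂_reverse_eq_zero_iff (RingHom.id ℂ) (z⁻¹)
      (q.map (algebraMap ℝ ℂ))
    rw [invOf_eq_inv, inv_inv] at hiff
    have heval : (q.map (algebraMap ℝ ℂ)).eval z⁻¹ = 0 := hiff.mp hz'
    have habs := hqroots z⁻¹ heval
    rw [norm_inv] at habs
    rw [← habs, inv_inv]
  -- A^n v lies in the kernel of qr(S)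
  have hqrev_eval : Polynomial.aeval S q.reverse = S ^ d * Polynomial.aeval A q :=
    aeval_reverse_of_inverse A S hSA hAS q
  have hcommAq : ∀ n : ℕ, (Polynomial.aeval A q) ((A ^ n) v) = (A ^ n) ((Polynomial.aeval A q) v) := by
    intro n
    have hmul : Polynomial.aeval A q * A ^ n = A ^ n * Polynomial.aeval A q := by
      have hXn : A ^ n = Polynomial.aeval A ((X : ℝ[X]) ^ n) := by
        rw [map_pow, aeval_X]
      rw [hXn, ← map_mul, ← map_mul, mul_comm]
    calc (Polynomial.aeval A q) ((A ^ n) v) = (Polynomial.aeval A q * A ^ n) v := rfl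
      _ = (A ^ n * Polynomial.aeval A q) v := by rw [hmul]
      _ = (A ^ n) ((Polynomial.aeval A q) v) := rfl
  have hker2 : ∀ n : ℕ, (A ^ n) v ∈ LinearMap.ker (Polynomial.aeval S qr) := by
    intro n
    rw [LinearMap.mem_ker, hqrdef, map_mul, aeval_C, Module.End.mul_apply, hqrev_eval,
      Module.End.mul_apply, hcommAq n, hvker, map_zero, map_zero, map_zero]
  -- the two norm bounds
  obtain ⟨K, hK0, hKb⟩ := norm_aeval_pow_le A q hqmonic hd1 hχ (fun z hz => (hqroots z hz).le)
  obtain ⟨K', hK'0, hK'b⟩ := norm_aeval_pow_le S qr hqrmonic (by rw [hqrdeg]; exact hd1)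
    (inv_pos.mpr hχ) hqrroots
  have hub : ∀ n : ℕ, ‖(A ^ n) v‖ ≤ K * ((n : ℝ) + 1) ^ d * χ ^ n * ‖v‖ :=
    fun n => hKb v hvmem n
  have hSnAn : ∀ n : ℕ, (S ^ n) ((A ^ n) v) = v := by
    intro n
    have h1 : S ^ n * A ^ n = 1 := by
      rw [← hcomm.mul_pow, hSA, one_pow]
    calc (S ^ n) ((A ^ n) v) = (S ^ n * A ^ n) v := rfl
      _ = v := by rw [h1]; rfl
  have hlb : ∀ n : ℕ, ‖v‖ ≤ K' * ((n : ℝ) + 1) ^ d * χ⁻¹ ^ n * ‖(A ^ n) v‖ := by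
    intro n
    have h2 := hK'b ((A ^ n) v) (hker2 n) n
    rw [hSnAn n, hqrdeg] at h2
    exact h2
  -- positivity of norms
  have hv_pos : 0 < ‖v‖ := norm_pos_iff.mpr hv0
  have hAn_pos : ∀ n : ℕ, 0 < ‖(A ^ n) v‖ := by
    intro n
    rcases (norm_nonneg ((A ^ n) v)).lt_or_eq with h | h
    · exact h
    · exfalso
      have h3 := hlb n
      rw [← h, mul_zero] at h3
      linarith
  -- the squeeze
  have hU : Tendsto (fun n : ℕ => Real.log χ
      + (Real.log K + Real.log ‖v‖ + (d : ℝ) * Real.log ((n : ℝ) + 1)) * (1 / (n : ℝ)))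
      atTop (nhds (Real.log χ)) := by
    have := tendsto_const_nhds (x := Real.log χ) (f := atTop (α := ℕ)) |>.add
      (aux_tendsto (Real.log K + Real.log ‖v‖) (d : ℝ))
    rw [add_zero] at this
    exact this
  have hL : Tendsto (fun n : ℕ => Real.log χ
      + (Real.log ‖v‖ - Real.log K' - (d : ℝ) * Real.log ((n : ℝ) + 1)) * (1 / (n : ℝ)))
      atTop (nhds (Real.log χ)) := by
    have h4 := tendsto_const_nhds (x := Real.log χ) (f := atTop (α := ℕ)) |>.add
      (aux_tendsto (Real.log ‖v‖ - Real.log K') (-(d : ℝ)))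
    rw [add_zero] at h4
    refine h4.congr fun n => ?_
    ring
  refine tendsto_of_tendsto_of_tendsto_of_le_of_le' hL hU ?_ ?_
  · -- lower bound eventually
    filter_upwards [eventually_ge_atTop 1] with n hn
    have hn0 : (0 : ℝ) < n := by exact_mod_cast hn
    have h1 : Real.log ‖v‖ ≤ Real.log (K' * ((n : ℝ) + 1) ^ d * χ⁻¹ ^ n * ‖(A ^ n) v‖) :=
      Real.log_le_log hv_pos (hlb n)
    have h2 : Real.log (K' * ((n : ℝ) + 1) ^ d * χ⁻¹ ^ n * ‖(A ^ n) v‖)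
        = Real.log K' + (d : ℝ) * Real.log ((n : ℝ) + 1) - (n : ℝ) * Real.log χ
          + Real.log ‖(A ^ n) v‖ := by
      rw [Real.log_mul (by positivity) (hAn_pos n).ne', Real.log_mul (by positivity) (by positivity),
        Real.log_mul hK'0.ne' (by positivity), Real.log_pow, Real.log_pow, Real.log_inv]
      push_cast
      ring
    rw [h2] at h1
    have h3 : Real.log ‖v‖ - Real.log K' - (d : ℝ) * Real.log ((n : ℝ) + 1)
        + (n : ℝ) * Real.log χ ≤ Real.log ‖(A ^ n) v‖ := by linarith
    have h4 := mul_le_mul_of_nonneg_left h3 (le_of_lt (by positivity : (0:ℝ) < 1 / (n : ℝ)))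
    calc Real.log χ + (Real.log ‖v‖ - Real.log K' - (d : ℝ) * Real.log ((n : ℝ) + 1)) * (1 / (n : ℝ))
        = (1 / (n : ℝ)) * (Real.log ‖v‖ - Real.log K' - (d : ℝ) * Real.log ((n : ℝ) + 1)
            + (n : ℝ) * Real.log χ) := by
          field_simp
          ring
      _ ≤ (1 / (n : ℝ)) * Real.log ‖(A ^ n) v‖ := h4
  · -- upper bound eventually
    filter_upwards [eventually_ge_atTop 1] with n hn
    have hn0 : (0 : ℝ) < n := by exact_mod_cast hn
    have h1 : Real.log ‖(A ^ n) v‖ ≤ Real.log (K * ((n : ℝ) + 1) ^ d * χ ^ n * ‖v‖) :=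
      Real.log_le_log (hAn_pos n) (hub n)
    have h2 : Real.log (K * ((n : ℝ) + 1) ^ d * χ ^ n * ‖v‖)
        = Real.log K + (d : ℝ) * Real.log ((n : ℝ) + 1) + (n : ℝ) * Real.log χ
          + Real.log ‖v‖ := by
      rw [Real.log_mul (by positivity) hv_pos.ne', Real.log_mul (by positivity) (by positivity),
        Real.log_mul hK0.ne' (by positivity), Real.log_pow, Real.log_pow]
    rw [h2] at h1
    have h4 := mul_le_mul_of_nonneg_left h1 (le_of_lt (by positivity : (0:ℝ) < 1 / (n : ℝ)))
    calc (1 / (n : ℝ)) * Real.log ‖(A ^ n) v‖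
        ≤ (1 / (n : ℝ)) * (Real.log K + (d : ℝ) * Real.log ((n : ℝ) + 1)
            + (n : ℝ) * Real.log χ + Real.log ‖v‖) := h4
      _ = Real.log χ + (Real.log K + Real.log ‖v‖ + (d : ℝ) * Real.log ((n : ℝ) + 1)) * (1 / (n : ℝ)) := by
          field_simp
          ring
end

section
/- Let f : [-ε, ε]² → ℝ be continuous with |f| ≤ K everywhere. Then there exists a C¹ function σ defined on some interval [0, a] with 0 < a ≤ ε, satisfying σ(0) = 0 and σ'(t) = f(t, σ(t)), such that either a = ε, or |σ(a)| = ε (i.e., the solution either reaches the right edge of the square or exits through the top or bottom). -/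
open Set intervalIntegral MeasureTheory Filter Topology

noncomputable def pjE (ε t : ℝ) : ℝ := max (-ε) (min t ε)

lemma pjE_mem {ε : ℝ} (hε : 0 ≤ ε) (t : ℝ) : pjE ε t ∈ Icc (-ε) ε :=
  ⟨le_max_left _ _, max_le (by linarith) (min_le_right _ _)⟩

lemma pjE_eq {ε t : ℝ} (ht : t ∈ Icc (-ε) ε) : pjE ε t = t := by
  unfold pjE
  rw [min_eq_left ht.2, max_eq_right ht.1]

lemma continuous_pjE (ε : ℝ) : Continuous (pjE ε) :=
  continuous_const.max ((continuous_id.min continuous_const))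

noncomputable def gExt (ε : ℝ) (f : ℝ × ℝ → ℝ) (p : ℝ × ℝ) : ℝ :=
  f (pjE ε p.1, pjE ε p.2)

lemma gExt_cont {ε : ℝ} (hε : 0 ≤ ε) {f : ℝ × ℝ → ℝ}
    (hf : ContinuousOn f (Icc (-ε) ε ×ˢ Icc (-ε) ε)) : Continuous (gExt ε f) := by
  apply hf.comp_continuous
  · exact ((continuous_pjE ε).comp continuous_fst).prodMk
      ((continuous_pjE ε).comp continuous_snd)
  · intro p
    exact ⟨pjE_mem hε _, pjE_mem hε _⟩

lemma gExt_bound {ε K : ℝ} (hε : 0 ≤ ε) {f : ℝ × ℝ → ℝ}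
    (hK : ∀ q ∈ Icc (-ε) ε ×ˢ Icc (-ε) ε, |f q| ≤ K) (p : ℝ × ℝ) : |gExt ε f p| ≤ K :=
  hK _ ⟨pjE_mem hε _, pjE_mem hε _⟩

lemma gExt_eq {ε : ℝ} {f : ℝ × ℝ → ℝ} {p : ℝ × ℝ}
    (hp : p ∈ Icc (-ε) ε ×ˢ Icc (-ε) ε) : gExt ε f p = f p := by
  unfold gExt
  rw [pjE_eq hp.1, pjE_eq hp.2]

/-- delayed Euler-type approximations -/
noncomputable def eul (g : ℝ × ℝ → ℝ) (n : ℕ) : ℕ → ℝ → ℝ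
  | 0 => fun _ => 0
  | k+1 => fun t => ∫ s in (0:ℝ)..t, g (s, eul g n k (max 0 (s - 1/(n:ℝ))))

section eul
variable {g : ℝ × ℝ → ℝ} {K : ℝ}

lemma eul_cont (hg : Continuous g) (n k : ℕ) : Continuous (eul g n k) := by
  induction k with
  | zero => exact continuous_const
  | succ k ih =>
    show Continuous fun t => ∫ s in (0:ℝ)..t, g (s, eul g n k (max 0 (s - 1/(n:ℝ))))
    apply intervalIntegral.continuous_primitive
    intro a b
    apply Continuous.intervalIntegrable
    exact hg.comp (continuous_id.prodMk (ih.comp (continuous_const.max (continuous_id.sub continuous_const))))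

lemma eul_integrand_cont (hg : Continuous g) (n k : ℕ) :
    Continuous fun s => g (s, eul g n k (max 0 (s - 1/(n:ℝ)))) :=
  hg.comp (continuous_id.prodMk ((eul_cont hg n k).comp
    (continuous_const.max (continuous_id.sub continuous_const))))

lemma eul_zero (n k : ℕ) : eul g n k 0 = 0 := by
  cases k with
  | zero => rfl
  | succ k => simp [eul]

lemma eul_lip (hg : Continuous g) (hgK : ∀ p, |g p| ≤ K) (hK0 : 0 ≤ K) (n k : ℕ) (t t' : ℝ) :
    |eul g n k t - eul g n k t'| ≤ K * |t - t'| := by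
  cases k with
  | zero =>
    show |(0:ℝ) - 0| ≤ K * |t - t'|
    simp only [sub_zero, abs_zero]
    positivity
  | succ k =>
    show |(∫ s in (0:ℝ)..t, g (s, eul g n k (max 0 (s - 1/(n:ℝ))))) -
        ∫ s in (0:ℝ)..t', g (s, eul g n k (max 0 (s - 1/(n:ℝ))))| ≤ _
    rw [intervalIntegral.integral_interval_sub_left
      ((eul_integrand_cont hg n k).intervalIntegrable _ _)
      ((eul_integrand_cont hg n k).intervalIntegrable _ _)]
    rw [← Real.norm_eq_abs]
    exact intervalIntegral.norm_integral_le_of_norm_le_const (fun x _ => hgK _)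

lemma eul_bound (hg : Continuous g) (hgK : ∀ p, |g p| ≤ K) (hK0 : 0 ≤ K) (n k : ℕ) (t : ℝ) :
    |eul g n k t| ≤ K * |t| := by
  have := eul_lip hg hgK hK0 n k t 0
  rwa [eul_zero, sub_zero, sub_zero] at this

lemma eul_stab (hg : Continuous g) (n : ℕ) (hn : 1 ≤ n) :
    ∀ k : ℕ, ∀ t : ℝ, 0 ≤ t → t ≤ (k:ℝ) / n → eul g n (k+1) t = eul g n k t := by
  intro k
  induction k with
  | zero =>
    intro t ht0 ht1
    have : t = 0 := le_antisymm (by simpa using ht1) ht0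
    rw [this, eul_zero, eul_zero]
  | succ k ih =>
    intro t ht0 ht1
    show (∫ s in (0:ℝ)..t, g (s, eul g n (k+1) (max 0 (s - 1/(n:ℝ))))) =
        ∫ s in (0:ℝ)..t, g (s, eul g n k (max 0 (s - 1/(n:ℝ))))
    apply intervalIntegral.integral_congr
    intro s hs
    rw [Set.uIcc_of_le ht0] at hs
    have hnpos : (0:ℝ) < n := by exact_mod_cast hn
    have hd0 : (0:ℝ) ≤ max 0 (s - 1/(n:ℝ)) := le_max_left _ _
    have hd1 : max 0 (s - 1/(n:ℝ)) ≤ (k:ℝ) / n := by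
      apply max_le
      · positivity
      · have hs2 : s ≤ ((k:ℝ)+1) / n := by
          have := le_trans hs.2 ht1
          push_cast at this
          linarith
        have heq : ((k:ℝ)+1)/n = (k:ℝ)/n + 1/n := by ring
        linarith
    simp only []
    rw [ih _ hd0 hd1]


lemma eul_eq (hg : Continuous g) {n N : ℕ} (hn : 1 ≤ n) {ε t : ℝ} (hεN : ε ≤ (N:ℝ)/n)
    (ht : t ∈ Icc 0 ε) :
    eul g n (N+1) t = ∫ s in (0:ℝ)..t, g (s, eul g n (N+1) (max 0 (s - 1/(n:ℝ)))) := by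
  conv_lhs => rw [eul]
  apply intervalIntegral.integral_congr
  intro s hs
  rw [Set.uIcc_of_le ht.1] at hs
  simp only []
  have hd0 : (0:ℝ) ≤ max 0 (s - 1/(n:ℝ)) := le_max_left _ _
  have hd1 : max 0 (s - 1/(n:ℝ)) ≤ (N:ℝ) / n := by
    apply max_le
    · positivity
    · have h1 : (0:ℝ) < n := by exact_mod_cast hn
      have h2 : (0:ℝ) ≤ 1/(n:ℝ) := by positivity
      linarith [hs.2, ht.2]
  rw [eul_stab hg n hn N _ hd0 hd1]

/-- the approximating sequence on `[0, ε]` -/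
noncomputable def eseq (g : ℝ × ℝ → ℝ) (ε : ℝ) (m : ℕ) : ℝ → ℝ :=
  eul g (m+1) (⌈ε*((m:ℝ)+1)⌉₊ + 1)

lemma eseq_cont (hg : Continuous g) (ε : ℝ) (m : ℕ) : Continuous (eseq g ε m) :=
  eul_cont hg _ _

lemma eseq_zero (ε : ℝ) (m : ℕ) : eseq g ε m 0 = 0 := eul_zero _ _

lemma eseq_lip (hg : Continuous g) (hgK : ∀ p, |g p| ≤ K) (hK0 : 0 ≤ K) (ε : ℝ) (m : ℕ)
    (t t' : ℝ) : |eseq g ε m t - eseq g ε m t'| ≤ K * |t - t'| :=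
  eul_lip hg hgK hK0 _ _ _ _

lemma eseq_bound (hg : Continuous g) (hgK : ∀ p, |g p| ≤ K) (hK0 : 0 ≤ K) (ε : ℝ) (m : ℕ)
    (t : ℝ) : |eseq g ε m t| ≤ K * |t| :=
  eul_bound hg hgK hK0 _ _ _

lemma eseq_eq (hg : Continuous g) {ε : ℝ} (hε : 0 < ε) (m : ℕ) {t : ℝ} (ht : t ∈ Icc 0 ε) :
    eseq g ε m t = ∫ s in (0:ℝ)..t, g (s, eseq g ε m (max 0 (s - 1/((m:ℝ)+1)))) := by
  have hc : ((m:ℝ)+1) = (((m+1:ℕ)):ℝ) := by push_cast; ring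
  have hεN : ε ≤ ((⌈ε*((m:ℝ)+1)⌉₊ : ℝ))/((m+1:ℕ):ℝ) := by
    rw [le_div_iff₀ (by positivity)]
    rw [← hc]
    exact Nat.le_ceil _
  unfold eseq
  rw [show (1:ℝ)/((m:ℝ)+1) = 1/(((m+1:ℕ)):ℝ) by rw [hc]]
  exact eul_eq hg (Nat.le_add_left 1 m) hεN ht

end eul

section compactness
variable {g : ℝ × ℝ → ℝ} {K : ℝ}

lemma exists_unif_limit (hg : Continuous g) (hgK : ∀ p, |g p| ≤ K) (hK0 : 0 ≤ K)
    {ε : ℝ} (hε : 0 < ε) :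
    ∃ σt : ℝ → ℝ, Continuous σt ∧ ∃ φ : ℕ → ℕ, StrictMono φ ∧
      ∀ t ∈ Icc 0 ε, Tendsto (fun k => eseq g ε (φ k) t) atTop (𝓝 (σt t)) := by
  set X := ↥(Icc (0:ℝ) ε)
  set S : Set C(X, ℝ) :=
    {h | (∀ x y : X, dist (h x) (h y) ≤ K * dist x y) ∧ ∀ x : X, |h x| ≤ K * ε} with hS
  have hS1 : IsCompact (ContinuousMap.toFun '' S) := by
    have himg : ContinuousMap.toFun '' S =
        {h : X → ℝ | (∀ x y : X, dist (h x) (h y) ≤ K * dist x y) ∧ ∀ x : X, |h x| ≤ K * ε} := by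
      ext h
      constructor
      · rintro ⟨h', hh', rfl⟩
        exact hh'
      · rintro ⟨h1, h2⟩
        have hlip : LipschitzWith (Real.toNNReal K) h := by
          apply LipschitzWith.of_dist_le_mul
          intro x y
          rw [Real.coe_toNNReal K hK0]
          exact h1 x y
        exact ⟨⟨h, hlip.continuous⟩, ⟨h1, h2⟩, rfl⟩
    rw [himg]
    apply IsCompact.of_isClosed_subset
      (isCompact_univ_pi (fun _ : X => isCompact_Icc (a := -(K*ε)) (b := K*ε)))
    · have : {h : X → ℝ | (∀ x y : X, dist (h x) (h y) ≤ K * dist x y) ∧ ∀ x : X, |h x| ≤ K * ε}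
          = (⋂ (x : X), ⋂ (y : X), {h : X → ℝ | dist (h x) (h y) ≤ K * dist x y}) ∩
            ⋂ (x : X), {h : X → ℝ | |h x| ≤ K * ε} := by
        ext h; simp [Set.mem_iInter]
      rw [this]
      apply IsClosed.inter
      · exact isClosed_iInter fun x => isClosed_iInter fun y =>
          isClosed_le ((continuous_apply x).dist (continuous_apply y)) continuous_const
      · exact isClosed_iInter fun x =>
          isClosed_le ((continuous_apply x).abs) continuous_const
    · intro h hh
      rw [Set.mem_univ_pi]
      intro x
      rw [Set.mem_Icc]
      exact abs_le.mp (hh.2 x)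
  have hS2 : Equicontinuous ((↑) : S → X → ℝ) := by
    apply Metric.equicontinuous_of_continuity_modulus (fun r => K * r)
    · have : Tendsto (fun r : ℝ => K * r) (𝓝 0) (𝓝 (K * 0)) :=
        (continuous_const.mul continuous_id).tendsto 0
      simpa using this
    · intro x y i
      exact i.2.1 x y
  have hScomp : IsCompact S := ArzelaAscoli.isCompact_of_equicontinuous S hS1 hS2
  set F : ℕ → C(X, ℝ) := fun m =>
    ⟨fun x => eseq g ε m x, (eseq_cont hg ε m).comp continuous_subtype_val⟩ with hF
  have hFS : ∀ m, F m ∈ S := by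
    intro m
    constructor
    · intro x y
      rw [Subtype.dist_eq, Real.dist_eq, Real.dist_eq]
      exact eseq_lip hg hgK hK0 ε m _ _
    · intro x
      calc |eseq g ε m x| ≤ K * |(x:ℝ)| := eseq_bound hg hgK hK0 ε m _
        _ ≤ K * ε := by
            apply mul_le_mul_of_nonneg_left _ hK0
            rw [abs_of_nonneg x.2.1]
            exact x.2.2
  obtain ⟨σ₀, hσ₀S, φ, hφ, hconv⟩ := hScomp.tendsto_subseq hFS
  refine ⟨fun t => σ₀ (Set.projIcc 0 ε hε.le t),
    σ₀.continuous.comp continuous_projIcc, φ, hφ, ?_⟩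
  intro t ht
  have h1 : Tendsto (fun k => (F (φ k)) ⟨t, ht⟩) atTop (𝓝 (σ₀ ⟨t, ht⟩)) :=
    ((continuous_eval_const (⟨t, ht⟩ : X)).tendsto σ₀).comp hconv
  have h2 : (fun t => σ₀ (Set.projIcc 0 ε hε.le t)) t = σ₀ ⟨t, ht⟩ := by
    simp only [Set.projIcc_of_mem hε.le ht]
  rw [h2]
  exact h1
end compactness

section limiteq
variable {g : ℝ × ℝ → ℝ} {K : ℝ}

lemma limit_integral_eq (hg : Continuous g) (hgK : ∀ p, |g p| ≤ K) (hK0 : 0 ≤ K)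
    {ε : ℝ} (hε : 0 < ε) {σt : ℝ → ℝ} (hσt : Continuous σt) {φ : ℕ → ℕ} (hφ : StrictMono φ)
    (hconv : ∀ t ∈ Icc 0 ε, Tendsto (fun k => eseq g ε (φ k) t) atTop (𝓝 (σt t))) :
    ∀ t ∈ Icc 0 ε, σt t = ∫ s in (0:ℝ)..t, g (s, σt s) := by
  have claimB : ∀ s ∈ Icc 0 ε,
      Tendsto (fun k => eseq g ε (φ k) (max 0 (s - 1/((φ k : ℝ)+1)))) atTop (𝓝 (σt s)) := by
    intro s hs
    rw [tendsto_iff_dist_tendsto_zero]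
    apply squeeze_zero (fun k => dist_nonneg)
      (g := fun k : ℕ => K * (1/((k:ℝ)+1)) + dist (eseq g ε (φ k) s) (σt s))
    · intro k
      have h1 : dist (eseq g ε (φ k) (max 0 (s - 1/((φ k : ℝ)+1)))) (σt s) ≤
          dist (eseq g ε (φ k) (max 0 (s - 1/((φ k : ℝ)+1)))) (eseq g ε (φ k) s) +
          dist (eseq g ε (φ k) s) (σt s) := dist_triangle _ _ _
      have hh0 : (0:ℝ) ≤ 1/((φ k : ℝ)+1) := by positivity
      have habs : |max 0 (s - 1/((φ k : ℝ)+1)) - s| ≤ 1/((φ k : ℝ)+1) := by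
        apply abs_le.mpr
        constructor
        · linarith [le_max_right 0 (s - 1/((φ k : ℝ)+1))]
        · have : max 0 (s - 1/((φ k : ℝ)+1)) ≤ s := max_le hs.1 (by linarith)
          linarith
      have h2 : dist (eseq g ε (φ k) (max 0 (s - 1/((φ k : ℝ)+1)))) (eseq g ε (φ k) s) ≤
          K * (1/((k:ℝ)+1)) := by
        rw [Real.dist_eq]
        calc |eseq g ε (φ k) (max 0 (s - 1/((φ k : ℝ)+1))) - eseq g ε (φ k) s|
            ≤ K * |max 0 (s - 1/((φ k : ℝ)+1)) - s| := eseq_lip hg hgK hK0 ε _ _ _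
          _ ≤ K * (1/((φ k : ℝ)+1)) := mul_le_mul_of_nonneg_left habs hK0
          _ ≤ K * (1/((k:ℝ)+1)) := by
              apply mul_le_mul_of_nonneg_left _ hK0
              apply one_div_le_one_div_of_le (by positivity)
              have h3 : k ≤ φ k := hφ.le_apply
              have h4 : (k:ℝ) ≤ (φ k : ℝ) := Nat.cast_le.mpr h3
              linarith
      linarith
    · have : Tendsto (fun k : ℕ => K * (1/((k:ℝ)+1)) + dist (eseq g ε (φ k) s) (σt s))
          atTop (𝓝 (K * 0 + 0)) :=
        (tendsto_const_nhds.mul tendsto_one_div_add_atTop_nhds_zero_nat).add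
          (tendsto_iff_dist_tendsto_zero.mp (hconv s hs))
      simpa using this
  intro t ht
  have hlim : Tendsto (fun k => ∫ s in (0:ℝ)..t,
      g (s, eseq g ε (φ k) (max 0 (s - 1/((φ k : ℝ)+1))))) atTop
      (𝓝 (∫ s in (0:ℝ)..t, g (s, σt s))) := by
    apply intervalIntegral.tendsto_integral_filter_of_dominated_convergence (fun _ => K)
    · apply Eventually.of_forall
      intro k
      apply Continuous.aestronglyMeasurable
      exact hg.comp (continuous_id.prodMk ((eseq_cont hg ε (φ k)).comp
        (continuous_const.max (continuous_id.sub continuous_const))))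
    · apply Eventually.of_forall
      intro k
      apply MeasureTheory.ae_of_all
      intro s _
      rw [Real.norm_eq_abs]
      exact hgK _
    · exact intervalIntegrable_const
    · apply MeasureTheory.ae_of_all
      intro s hs
      rw [Set.uIoc_of_le ht.1] at hs
      have hs' : s ∈ Icc 0 ε := ⟨hs.1.le, hs.2.trans ht.2⟩
      have : Tendsto (fun k => ((s, eseq g ε (φ k) (max 0 (s - 1/((φ k : ℝ)+1)))) : ℝ × ℝ))
          atTop (𝓝 (s, σt s)) := tendsto_const_nhds.prodMk_nhds (claimB s hs')
      exact (hg.tendsto _).comp this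
  have heq : ∀ k, (∫ s in (0:ℝ)..t, g (s, eseq g ε (φ k) (max 0 (s - 1/((φ k : ℝ)+1)))))
      = eseq g ε (φ k) t := fun k => (eseq_eq hg hε (φ k) ht).symm
  rw [show (fun k => ∫ s in (0:ℝ)..t, g (s, eseq g ε (φ k) (max 0 (s - 1/((φ k : ℝ)+1)))))
      = fun k => eseq g ε (φ k) t from funext heq] at hlim
  exact tendsto_nhds_unique (hconv t ht) hlim
end limiteq

/-- Cauchy–Peano until exit: a solution of `y' = f(x,y)`, `y(0) = 0`, on the square
`[-ε,ε]²` with `f` continuous and bounded, extends until it reaches the right edge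
(`a = ε`) or exits through the top or bottom (`|σ(a)| = ε`). -/
theorem peano_solution_until_exit
    (ε K : ℝ) (hε : 0 < ε)
    (f : ℝ × ℝ → ℝ)
    (hf : ContinuousOn f (Set.Icc (-ε) ε ×ˢ Set.Icc (-ε) ε))
    (hK : ∀ q ∈ Set.Icc (-ε) ε ×ˢ Set.Icc (-ε) ε, |f q| ≤ K) :
    ∃ a ∈ Set.Ioc (0 : ℝ) ε, ∃ σ : ℝ → ℝ,
      σ 0 = 0 ∧
      (∀ t ∈ Set.Icc (0 : ℝ) a, |σ t| ≤ ε) ∧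
      (∀ t ∈ Set.Icc (0 : ℝ) a, HasDerivAt σ (f (t, σ t)) t) ∧
      (a = ε ∨ |σ a| = ε) := by
  have hε0 : (0:ℝ) ≤ ε := hε.le
  have h00 : ((0:ℝ),(0:ℝ)) ∈ Icc (-ε) ε ×ˢ Icc (-ε) ε :=
    by refine ⟨⟨?_, ?_⟩, ?_, ?_⟩ <;> simpa using hε.le
  have hK0 : 0 ≤ K := le_trans (abs_nonneg _) (hK _ h00)
  set g := gExt ε f with hgdef
  have hg : Continuous g := gExt_cont hε0 hf
  have hgK : ∀ p, |g p| ≤ K := gExt_bound hε0 hK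
  obtain ⟨σt, hσtc, φ, hφ, hconv⟩ := exists_unif_limit hg hgK hK0 hε
  have hinteq := limit_integral_eq hg hgK hK0 hε hσtc hφ hconv
  set σ : ℝ → ℝ := fun t => ∫ s in (0:ℝ)..t, g (s, σt s) with hσdef
  have hσeq : ∀ t ∈ Icc (0:ℝ) ε, σ t = σt t := fun t ht => (hinteq t ht).symm
  have hintc : Continuous fun s => g (s, σt s) := hg.comp (continuous_id.prodMk hσtc)
  have hderiv : ∀ t : ℝ, HasDerivAt σ (g (t, σt t)) t := fun t =>
    (hintc.integral_hasStrictDerivAt 0 t).hasDerivAt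
  have hσc : Continuous σ := continuous_iff_continuousAt.mpr fun t => (hderiv t).continuousAt
  have hσ0 : σ 0 = 0 := intervalIntegral.integral_same
  have hder' : ∀ t ∈ Icc (0:ℝ) ε, |σ t| ≤ ε → HasDerivAt σ (f (t, σ t)) t := by
    intro t ht hb
    have h1 := hderiv t
    rw [← hσeq t ht] at h1
    rwa [hgdef, gExt_eq ⟨⟨by linarith [ht.1], ht.2⟩, abs_le.mp hb⟩] at h1
  by_cases hexit : ∃ t ∈ Icc (0:ℝ) ε, ε ≤ |σ t|
  · set T := {t | t ∈ Icc (0:ℝ) ε ∧ ε ≤ |σ t|} with hT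
    obtain ⟨t₀, ht₀, ht₀'⟩ := hexit
    have hTne : T.Nonempty := ⟨t₀, ht₀, ht₀'⟩
    have hTbdd : BddBelow T := ⟨0, fun t ht => ht.1.1⟩
    have hTcl : IsClosed T := by
      have h2 : T = Icc (0:ℝ) ε ∩ {t | ε ≤ |σ t|} := rfl
      rw [h2]
      exact isClosed_Icc.inter (isClosed_le continuous_const hσc.abs)
    set a := sInf T with ha
    have haT : a ∈ T := hTcl.csInf_mem hTne hTbdd
    have ha0 : 0 < a := by
      rcases haT.1.1.lt_or_eq with h|h
      · exact h
      · exfalso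
        have := haT.2
        rw [← h, hσ0, abs_zero] at this
        linarith
    have hlt : ∀ t, 0 ≤ t → t < a → |σ t| < ε := by
      intro t ht0 hta
      by_contra hcon
      push_neg at hcon
      have : t ∈ T := ⟨⟨ht0, hta.le.trans haT.1.2⟩, hcon⟩
      exact absurd (csInf_le hTbdd this) (not_le.mpr hta)
    have hlea : |σ a| ≤ ε := by
      have hne : (𝓝[Set.Ico (0:ℝ) a] a).NeBot := by
        rw [← mem_closure_iff_nhdsWithin_neBot, closure_Ico ha0.ne]
        exact right_mem_Icc.mpr ha0.le
      have htt : Tendsto (fun t => |σ t|) (𝓝[Set.Ico (0:ℝ) a] a) (𝓝 |σ a|) :=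
        (hσc.abs.continuousAt).continuousWithinAt
      apply le_of_tendsto htt
      exact eventually_nhdsWithin_of_forall (s := Set.Ico (0:ℝ) a)
        (fun t ht => (hlt t ht.1 ht.2).le)
    have haeq : |σ a| = ε := le_antisymm hlea haT.2
    have hbnd : ∀ t ∈ Icc (0:ℝ) a, |σ t| ≤ ε := by
      intro t ht
      rcases ht.2.lt_or_eq with h|h
      · exact (hlt t ht.1 h).le
      · rw [h, haeq]
    refine ⟨a, ⟨ha0, haT.1.2⟩, σ, hσ0, hbnd, ?_, Or.inr haeq⟩
    intro t ht
    have htε : t ∈ Icc (0:ℝ) ε := ⟨ht.1, ht.2.trans haT.1.2⟩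
    exact hder' t htε (hbnd t ht)
  · push_neg at hexit
    exact ⟨ε, ⟨hε, le_refl ε⟩, σ, hσ0, fun t ht => (hexit t ht).le,
      fun t ht => hder' t ht (hexit t ht).le, Or.inl rfl⟩
end
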